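/- arXiv:2104.01986 — 2 statements merged into one kernel-verified Lean document; each statement's English description precedes it below -/
import Mathlib

section
/- Let μ₁ be a probability measure on ℝ^d, Δ ∈ ℝ^d with Δ ≠ 0, and let R : ℝ^d → ℝ^d be the gradient of a convex function u that is strictly convex on an open set B with μ₁(B) > 0. If X ∼ μ₁ and Y = X + Δ, and all relevant expectations exist, then E[R(X)] ≠ E[R(Y)]. -/
open MeasureTheory Set Filter Topology AffineMap
open scoped RealInnerProductSpace

/-!
Monotonicity of the gradient of a convex function `u`: restricting `u` to the line through `x`
and `y` gives a convex function of one variable whose derivatives at the endpoints are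
`⟪∇u x, y - x⟫` and `⟪∇u y, y - x⟫`, and the secant slope lies between them, so
`⟪∇u y - ∇u x, y - x⟫ ≥ 0`; strict convexity near `x` makes the first inequality strict.
Hence `x ↦ ⟪Δ, R (x + Δ) - R x⟫` is nonnegative and positive on `B`, so its integral
`⟪Δ, E[R(X + Δ)] - E[R(X)]⟫` is positive.
-/

theorem StrictConvexOn.comp_affineMap {𝕜 E F β : Type*} [Ring 𝕜] [PartialOrder 𝕜]
    [AddCommGroup E] [AddCommGroup F] [AddCommMonoid β] [PartialOrder β]
    [Module 𝕜 E] [Module 𝕜 F] [SMul 𝕜 β] {f : F → β} {s : Set F}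
    (hf : StrictConvexOn 𝕜 s f) (g : E →ᵃ[𝕜] F) (hg : Function.Injective g) :
    StrictConvexOn 𝕜 (g ⁻¹' s) (f ∘ g) :=
  ⟨hf.1.affine_preimage _, fun x hx y hy hxy a b ha hb hab => by
    simpa only [Function.comp_apply, Convex.combo_affine_apply hab] using
      hf.2 hx hy (hg.ne hxy) ha hb hab⟩

theorem strictConvexOn_of_forall_lt {E : Type*} [AddCommGroup E] [Module ℝ E] {s : Set E}
    {f : E → ℝ} (hs : Convex ℝ s)
    (hf : ∀ x ∈ s, ∀ y ∈ s, x ≠ y → ∀ α ∈ Ioo (0 : ℝ) 1,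
      f (α • x + (1 - α) • y) < α * f x + (1 - α) * f y) :
    StrictConvexOn ℝ s f := by
  refine ⟨hs, fun x hx y hy hxy a b ha hb hab => ?_⟩
  obtain rfl : b = 1 - a := by linarith
  exact hf x hx y hy hxy a ⟨ha, by linarith⟩

section Gradient

variable {E : Type*} [NormedAddCommGroup E] [InnerProductSpace ℝ E] [CompleteSpace E]
  {u : E → ℝ} {s t : Set E} {x y gx gy : E}

theorem HasGradientAt.hasDerivAt_comp_lineMap {g : E} {τ : ℝ}
    (h : HasGradientAt u g (lineMap x y τ)) :
    HasDerivAt (u ∘ lineMap x y) ⟪g, y - x⟫ τ := by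
  simpa using h.hasFDerivAt.comp_hasDerivAt τ hasDerivAt_lineMap

theorem ConvexOn.inner_sub_sub_nonneg_of_hasGradientAt (hu : ConvexOn ℝ s u) (hx : x ∈ s)
    (hy : y ∈ s) (hgx : HasGradientAt u gx x) (hgy : HasGradientAt u gy y) :
    0 ≤ ⟪gy - gx, y - x⟫ := by
  have hline := hu.comp_affineMap (lineMap x y)
  have h0 : (0 : ℝ) ∈ lineMap x y ⁻¹' s := by simpa using hx
  have h1 : (1 : ℝ) ∈ lineMap x y ⁻¹' s := by simpa using hy
  rw [inner_sub_left, sub_nonneg]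
  calc ⟪gx, y - x⟫ ≤ slope (u ∘ lineMap x y) 0 1 :=
        hline.le_slope_of_hasDerivAt h0 h1 one_pos
          (HasGradientAt.hasDerivAt_comp_lineMap (by simpa using hgx))
    _ ≤ ⟪gy, y - x⟫ :=
        hline.slope_le_of_hasDerivAt h0 h1 one_pos
          (HasGradientAt.hasDerivAt_comp_lineMap (by simpa using hgy))

theorem ConvexOn.inner_sub_sub_pos_of_hasGradientAt (hu : ConvexOn ℝ s u)
    (hsu : StrictConvexOn ℝ t u) (ht : t ∈ 𝓝 x) (hx : x ∈ s) (hy : y ∈ s) (hxy : x ≠ y)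
    (hgx : HasGradientAt u gx x) (hgy : HasGradientAt u gy y) :
    0 < ⟪gy - gx, y - x⟫ := by
  have hline := hu.comp_affineMap (lineMap x y)
  have hline_strict := hsu.comp_affineMap (lineMap x y) (lineMap_injective ℝ hxy)
  have h0 : (0 : ℝ) ∈ lineMap x y ⁻¹' s := by simpa using hx
  have h1 : (1 : ℝ) ∈ lineMap x y ⁻¹' s := by simpa using hy
  have hT : lineMap x y ⁻¹' t ∈ 𝓝 (0 : ℝ) :=
    (lineMap_continuous (R := ℝ)).continuousAt.preimage_mem_nhds (by simpa using ht)
  obtain ⟨τ, hτt, hτ⟩ :=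
    Filter.nonempty_of_mem (inter_mem (nhdsWithin_le_nhds hT) (Ioc_mem_nhdsGT one_pos))
  have hτs : τ ∈ lineMap x y ⁻¹' s := hline.1.ordConnected.out h0 h1 ⟨hτ.1.le, hτ.2⟩
  rw [inner_sub_left, sub_pos]
  calc ⟪gx, y - x⟫ < slope (u ∘ lineMap x y) 0 τ :=
        hline_strict.lt_slope_of_hasDerivAt (mem_of_mem_nhds hT) hτt hτ.1
          (HasGradientAt.hasDerivAt_comp_lineMap (by simpa using hgx))
    _ ≤ slope (u ∘ lineMap x y) 0 1 :=
        hline.slope_mono h0 ⟨hτs, hτ.1.ne'⟩ ⟨h1, one_ne_zero⟩ hτ.2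
    _ ≤ ⟪gy, y - x⟫ :=
        hline.slope_le_of_hasDerivAt h0 h1 one_pos
          (HasGradientAt.hasDerivAt_comp_lineMap (by simpa using hgy))

end Gradient

theorem stmt4_general {d : ℕ} (μ₁ : Measure (EuclideanSpace ℝ (Fin d)))
    (Δ : EuclideanSpace ℝ (Fin d)) (hΔ : Δ ≠ 0)
    (u : EuclideanSpace ℝ (Fin d) → ℝ)
    (R : EuclideanSpace ℝ (Fin d) → EuclideanSpace ℝ (Fin d))
    (hu : ConvexOn ℝ Set.univ u)
    (hgrad : ∀ x, HasGradientAt u (R x) x)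
    (B : Set (EuclideanSpace ℝ (Fin d))) (hB : IsOpen B) (hμB : 0 < μ₁ B)
    (hstrict : ∀ x ∈ B, ∀ y ∈ B, x ≠ y → ∀ α : ℝ, α ∈ Set.Ioo (0:ℝ) 1 →
      u (α • x + (1 - α) • y) < α * u x + (1 - α) * u y)
    (hint : Integrable R μ₁)
    (hint' : Integrable (fun x => R (x + Δ)) μ₁) :
    ∫ x, R x ∂μ₁ ≠ ∫ x, R (x + Δ) ∂μ₁ := by
  intro heq
  set f : EuclideanSpace ℝ (Fin d) → ℝ := fun x => ⟪Δ, R (x + Δ) - R x⟫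
  have hf_nonneg : 0 ≤ f := fun x => by
    simpa [f, real_inner_comm] using hu.inner_sub_sub_nonneg_of_hasGradientAt
      (mem_univ x) (mem_univ (x + Δ)) (hgrad x) (hgrad (x + Δ))
  have hB_support : B ⊆ Function.support f := fun x hx => by
    obtain ⟨ε, hε, hball⟩ := Metric.isOpen_iff.mp hB x hx
    have hstrict_ball : StrictConvexOn ℝ (Metric.ball x ε) u :=
      strictConvexOn_of_forall_lt (convex_ball x ε) fun a ha b hb =>
        hstrict a (hball ha) b (hball hb)
    have hx_ne : x ≠ x + Δ := fun h => hΔ (by simpa using h.symm)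
    have hpos := hu.inner_sub_sub_pos_of_hasGradientAt hstrict_ball (Metric.ball_mem_nhds x hε)
      (mem_univ x) (mem_univ (x + Δ)) hx_ne (hgrad x) (hgrad (x + Δ))
    simpa [f, real_inner_comm] using hpos.ne'
  have hf_int : Integrable f μ₁ := (hint'.sub hint).const_inner Δ
  have hf_pos : 0 < ∫ x, f x ∂μ₁ := (integral_pos_iff_support_of_nonneg hf_nonneg hf_int).2
    (hμB.trans_le (measure_mono hB_support))
  have hf_zero : ∫ x, f x ∂μ₁ = 0 :=
    calc ∫ x, f x ∂μ₁ = ⟪Δ, ∫ x, R (x + Δ) ∂μ₁ - ∫ x, R x ∂μ₁⟫ := by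
          rw [← integral_sub hint' hint]; exact integral_inner (hint'.sub hint) Δ
      _ = 0 := by rw [heq, sub_self, inner_zero_right]
  exact hf_pos.ne' hf_zero

/-- If `R = ∇u` with `u` convex and strictly convex on an open set `B` of positive
`μ₁`-measure, and `Δ ≠ 0`, then `E[R(X)] ≠ E[R(X + Δ)]` for `X ∼ μ₁`. -/
theorem stmt4 {d : ℕ} (μ₁ : Measure (EuclideanSpace ℝ (Fin d))) [IsProbabilityMeasure μ₁]
    (Δ : EuclideanSpace ℝ (Fin d)) (hΔ : Δ ≠ 0)
    (u : EuclideanSpace ℝ (Fin d) → ℝ)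
    (R : EuclideanSpace ℝ (Fin d) → EuclideanSpace ℝ (Fin d))
    (hu : ConvexOn ℝ Set.univ u)
    (hgrad : ∀ x, HasGradientAt u (R x) x)
    (B : Set (EuclideanSpace ℝ (Fin d))) (hB : IsOpen B) (hμB : 0 < μ₁ B)
    (hstrict : ∀ x ∈ B, ∀ y ∈ B, x ≠ y → ∀ α : ℝ, α ∈ Set.Ioo (0:ℝ) 1 →
      u (α • x + (1 - α) • y) < α * u x + (1 - α) * u y)
    (hint : Integrable R μ₁)
    (hint' : Integrable (fun x => R (x + Δ)) μ₁) :
    ∫ x, R x ∂μ₁ ≠ ∫ x, R (x + Δ) ∂μ₁ :=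
  stmt4_general μ₁ Δ hΔ u R hu hgrad B hB hμB hstrict hint hint'
end

section
/- Among probability density functions f on ℝ with mean θ and variance σ² (0 < σ² < ∞), the quantity σ (∫ f(x)² dx)² is bounded below by 9/125, with equality attained by the Epanechnikov-type density f(x) = (3/(20√5 σ³))(5σ² − (x−θ)²) 𝟙{|x−θ| ≤ √5 σ} — up to rescaling. Consequently 12 σ² (∫ f²)² ≥ 108/125. -/
open MeasureTheory

/-!
With `s = √5 σ` and `g(x) = (s² − (x − θ)²)₊`, the pointwise bound `g(x) ≥ s² − (x − θ)²` gives
`∫ f g ≥ s² − σ² = 4σ²`, while Cauchy–Schwarz gives `(∫ f g)² ≤ ∫ f² · ∫ g² = ∫ f² · (16/15) s⁵`.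
Together these yield `σ ∫ f² ≥ 3 / (5√5)`. The constant is attained by `f = c g` for the
normalising `c`, which is exactly the equality case of Cauchy–Schwarz.
-/

theorem sq_integral_mul_le_integral_sq_mul_integral_sq {α : Type*} [MeasurableSpace α]
    {μ : Measure α} {f g : α → ℝ} (hf : MemLp f 2 μ) (hg : MemLp g 2 μ) :
    (∫ x, f x * g x ∂μ) ^ 2 ≤ (∫ x, f x ^ 2 ∂μ) * ∫ x, g x ^ 2 ∂μ := by
  have hfg : Integrable (fun x => f x * g x) μ := hf.integrable_mul hg
  have hf2 := (memLp_two_iff_integrable_sq hf.1).1 hf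
  have hg2 := (memLp_two_iff_integrable_sq hg.1).1 hg
  have hquad : ∀ t : ℝ, 0 ≤ (∫ x, f x ^ 2 ∂μ) * (t * t) + (-2 * ∫ x, f x * g x ∂μ) * t
      + ∫ x, g x ^ 2 ∂μ := by
    intro t
    calc 0 ≤ ∫ x, (t * f x - g x) ^ 2 ∂μ := integral_nonneg fun x => sq_nonneg _
      _ = ∫ x, (t ^ 2 * f x ^ 2 - 2 * t * (f x * g x) + g x ^ 2) ∂μ := by
          congr 1 with x; ring
      _ = _ := by
          have hsub : Integrable (fun x => t ^ 2 * f x ^ 2 - 2 * t * (f x * g x)) μ :=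
            (hf2.const_mul _).sub (hfg.const_mul _)
          rw [integral_add hsub hg2,
            integral_sub (hf2.const_mul _) (hfg.const_mul _), integral_const_mul,
            integral_const_mul]
          ring
  have := discrim_le_zero hquad
  rw [discrim] at this
  linarith

def epanechnikov (θ s x : ℝ) : ℝ := max (s ^ 2 - (x - θ) ^ 2) 0

lemma epanechnikov_eq_zero_of_le {θ s x : ℝ} (h : s ^ 2 ≤ (x - θ) ^ 2) :
    epanechnikov θ s x = 0 :=
  max_eq_right (sub_nonpos.2 h)

lemma epanechnikov_of_le {θ s x : ℝ} (h : (x - θ) ^ 2 ≤ s ^ 2) :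
    epanechnikov θ s x = s ^ 2 - (x - θ) ^ 2 :=
  max_eq_left (sub_nonneg.2 h)

lemma continuous_epanechnikov (θ s : ℝ) : Continuous (epanechnikov θ s) := by
  unfold epanechnikov; fun_prop

lemma hasCompactSupport_epanechnikov (θ s : ℝ) : HasCompactSupport (epanechnikov θ s) := by
  refine HasCompactSupport.intro (isCompact_Icc (a := θ - |s|) (b := θ + |s|)) fun x hx => ?_
  apply epanechnikov_eq_zero_of_le
  rw [sq_le_sq]
  rw [Set.mem_Icc, not_and_or, not_le, not_le] at hx
  rcases hx with h | h
  · rw [abs_of_neg (by linarith [abs_nonneg s] : x - θ < 0)]; linarith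
  · rw [abs_of_pos (by linarith [abs_nonneg s] : 0 < x - θ)]; linarith

lemma memLp_epanechnikov (θ s : ℝ) (p : ENNReal) : MemLp (epanechnikov θ s) p :=
  (continuous_epanechnikov θ s).memLp_of_hasCompactSupport (hasCompactSupport_epanechnikov θ s)

lemma integral_epanechnikov_sq {s : ℝ} (θ : ℝ) (hs : 0 ≤ s) :
    ∫ x, epanechnikov θ s x ^ 2 = 16 / 15 * s ^ 5 := by
  have hshift : ∀ x, epanechnikov θ s x ^ 2 = epanechnikov 0 s (x - θ) ^ 2 := by
    intro x; simp [epanechnikov]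
  have hind : (fun x => epanechnikov 0 s x ^ 2) =
      (Set.Icc (-s) s).indicator fun x => (s ^ 2 - x ^ 2) ^ 2 := by
    ext x
    by_cases hx : x ∈ Set.Icc (-s) s
    · rw [Set.indicator_of_mem hx, epanechnikov_of_le (by simpa using sq_le_sq' hx.1 hx.2),
        sub_zero]
    · rw [Set.indicator_of_notMem hx, epanechnikov_eq_zero_of_le, zero_pow two_ne_zero]
      rw [Set.mem_Icc, not_and_or, not_le, not_le] at hx
      rcases hx with h | h <;> nlinarith
  simp_rw [hshift]
  rw [integral_sub_right_eq_self (fun x => epanechnikov 0 s x ^ 2), hind,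
    integral_indicator measurableSet_Icc, integral_Icc_eq_integral_Ioc,
    ← intervalIntegral.integral_of_le (by linarith)]
  simp_rw [show ∀ x : ℝ, (s ^ 2 - x ^ 2) ^ 2 = s ^ 4 - 2 * s ^ 2 * x ^ 2 + x ^ 4 by intro x; ring]
  have hii {g : ℝ → ℝ} (hg : Continuous g) : IntervalIntegrable g volume (-s) s :=
    hg.intervalIntegrable _ _
  rw [intervalIntegral.integral_add (hii (by fun_prop)) (hii (by fun_prop)),
    intervalIntegral.integral_sub (hii (by fun_prop)) (hii (by fun_prop)),
    intervalIntegral.integral_const, intervalIntegral.integral_const_mul, integral_pow, integral_pow]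
  simp only [smul_eq_mul]
  ring

lemma sub_integral_le_integral_mul_epanechnikov (θ s : ℝ) {f : ℝ → ℝ} (hf0 : ∀ x, 0 ≤ f x)
    (hfInt : Integrable f) (hvInt : Integrable fun x => (x - θ) ^ 2 * f x) :
    s ^ 2 * (∫ x, f x) - ∫ x, (x - θ) ^ 2 * f x ≤ ∫ x, f x * epanechnikov θ s x := by
  rw [← integral_const_mul, ← integral_sub (hfInt.const_mul _) hvInt]
  refine integral_mono ((hfInt.const_mul _).sub hvInt)
    (hfInt.mul_of_top_left (memLp_epanechnikov θ s ⊤)) fun x => ?_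
  calc s ^ 2 * f x - (x - θ) ^ 2 * f x = f x * (s ^ 2 - (x - θ) ^ 2) := by ring
    _ ≤ f x * epanechnikov θ s x := mul_le_mul_of_nonneg_left (le_max_left _ _) (hf0 x)

theorem nine_div_125_le_sq_mul_sq_integral_sq {θ σ : ℝ} (hσ : 0 < σ) {f : ℝ → ℝ}
    (hf0 : ∀ x, 0 ≤ f x) (hfInt : Integrable f) (hf1 : ∫ x, f x = 1)
    (hvInt : Integrable fun x => (x - θ) ^ 2 * f x) (hvar : ∫ x, (x - θ) ^ 2 * f x = σ ^ 2)
    (hf2 : Integrable fun x => f x ^ 2) :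
    9 / 125 ≤ σ ^ 2 * (∫ x, f x ^ 2) ^ 2 := by
  set I := ∫ x, f x ^ 2
  set s := √5 * σ
  have h5 : √5 ^ 2 = 5 := Real.sq_sqrt (by norm_num)
  have hs2 : s ^ 2 = 5 * σ ^ 2 := by rw [mul_pow, h5]
  have hs5 : s ^ 5 = 25 * √5 * σ ^ 5 := by
    rw [mul_pow, show √5 ^ 5 = (√5 ^ 2) ^ 2 * √5 by ring, h5]; ring
  have hmass : 4 * σ ^ 2 ≤ ∫ x, f x * epanechnikov θ s x := by
    have := sub_integral_le_integral_mul_epanechnikov θ s hf0 hfInt hvInt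
    rw [hf1, hvar, hs2] at this
    linarith
  have hCS := sq_integral_mul_le_integral_sq_mul_integral_sq
    ((memLp_two_iff_integrable_sq hfInt.1).2 hf2) (memLp_epanechnikov θ s 2)
  rw [integral_epanechnikov_sq θ (by positivity), hs5] at hCS
  have hσI : 3 ≤ 5 * √5 * σ * I := by
    have h : σ ^ 4 * 3 ≤ σ ^ 4 * (5 * √5 * σ * I) := by
      nlinarith [pow_le_pow_left₀ (by positivity) hmass 2]
    exact le_of_mul_le_mul_left h (by positivity)
  calc 9 / 125 = 3 ^ 2 / 125 := by norm_num
    _ ≤ (5 * √5 * σ * I) ^ 2 / 125 := by gcongr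
    _ = σ ^ 2 * I ^ 2 := by rw [mul_pow, mul_pow, mul_pow, h5]; ring

lemma epanechnikov_density_eq (θ σ x : ℝ) (hσ : 0 < σ) :
    (if |x - θ| ≤ √5 * σ then 3 / (20 * √5 * σ ^ 3) * (5 * σ ^ 2 - (x - θ) ^ 2) else 0) =
      3 / (20 * √5 * σ ^ 3) * epanechnikov θ (√5 * σ) x := by
  have hs2 : (√5 * σ) ^ 2 = 5 * σ ^ 2 := by rw [mul_pow, Real.sq_sqrt (by norm_num)]
  have hs : |√5 * σ| = √5 * σ := abs_of_pos (by positivity)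
  split_ifs with hx
  · rw [epanechnikov_of_le (by rw [sq_le_sq, hs]; exact hx), hs2]
  · rw [epanechnikov_eq_zero_of_le (by rw [sq_le_sq, hs]; exact (not_le.1 hx).le), mul_zero]

theorem stmt13_general (θ σ : ℝ) (hσ : 0 < σ) (f : ℝ → ℝ)
    (hf0 : ∀ x, 0 ≤ f x)
    (hfInt : Integrable f) (hf1 : ∫ x, f x = 1)
    (hvInt : Integrable (fun x => (x - θ)^2 * f x)) (hvar : ∫ x, (x - θ)^2 * f x = σ^2)
    (hf2 : Integrable (fun x => (f x)^2)) :
    9/125 ≤ σ^2 * (∫ x, (f x)^2)^2 ∧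
    108/125 ≤ 12 * σ^2 * (∫ x, (f x)^2)^2 ∧
    ∀ f₀ : ℝ → ℝ,
      (∀ x, f₀ x = if |x - θ| ≤ Real.sqrt 5 * σ
        then 3 / (20 * Real.sqrt 5 * σ^3) * (5 * σ^2 - (x - θ)^2) else 0) →
      σ^2 * (∫ x, (f₀ x)^2)^2 = 9/125 := by
  have hbound := nine_div_125_le_sq_mul_sq_integral_sq hσ hf0 hfInt hf1 hvInt hvar hf2
  refine ⟨hbound, by linarith, fun f₀ hf₀ => ?_⟩
  simp_rw [hf₀, epanechnikov_density_eq _ _ _ hσ, mul_pow]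
  rw [integral_const_mul, integral_epanechnikov_sq θ (by positivity)]
  have h5 : √5 ^ 2 = 5 := Real.sq_sqrt (by norm_num)
  field_simp
  rw [show √5 ^ 6 = (√5 ^ 2) ^ 3 by ring, h5]
  norm_num

/-- Hodges–Lehmann (1956): among densities `f` on ℝ with mean `θ` and variance `σ²`,
`σ²(∫f²)² ≥ 9/125` (equivalently `12σ²(∫f²)² ≥ 108/125`), with equality attained by the
Epanechnikov-type density `f₀(x) = (3/(20√5σ³))(5σ² − (x−θ)²)𝟙{|x−θ| ≤ √5 σ}`. -/
theorem stmt13 (θ σ : ℝ) (hσ : 0 < σ) (f : ℝ → ℝ)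
    (hf0 : ∀ x, 0 ≤ f x) (hfm : Measurable f)
    (hfInt : Integrable f) (hf1 : ∫ x, f x = 1)
    (hmInt : Integrable (fun x => x * f x)) (hmean : ∫ x, x * f x = θ)
    (hvInt : Integrable (fun x => (x - θ)^2 * f x)) (hvar : ∫ x, (x - θ)^2 * f x = σ^2)
    (hf2 : Integrable (fun x => (f x)^2)) :
    9/125 ≤ σ^2 * (∫ x, (f x)^2)^2 ∧
    108/125 ≤ 12 * σ^2 * (∫ x, (f x)^2)^2 ∧
    ∀ f₀ : ℝ → ℝ,
      (∀ x, f₀ x = if |x - θ| ≤ Real.sqrt 5 * σ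
        then 3 / (20 * Real.sqrt 5 * σ^3) * (5 * σ^2 - (x - θ)^2) else 0) →
      σ^2 * (∫ x, (f₀ x)^2)^2 = 9/125 :=
  stmt13_general θ σ hσ f hf0 hfInt hf1 hvInt hvar hf2
end
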